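/- Let Λ be a chief of a nonempty sibling σ_3-invariant lamination and let ℓ ∈ Λ be a nondegenerate leaf. Then the family of iterated pullbacks of the nondegenerate iterated images of ℓ, namely G(ℓ) = {q ∈ Λ : σ_3^k(q) = σ_3^m(ℓ) for some integers k, m ≥ 0 with σ_3^m(ℓ) nondegenerate}, is dense in Λ: every nondegenerate leaf of Λ lies in the closure of G(ℓ) in the space of chords. -/

import Mathlib

noncomputable section

open Filter Metric

/-- Points of the unit circle `S`. -/
abbrev SPt : Type := {z : ℂ // ‖z‖ = 1}

/-- The unit circle, as a subset of `ℂ`. -/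
def circleSet : Set ℂ := {z : ℂ | ‖z‖ = 1}

/-- The open unit disk `D`. -/
def openDisk : Set ℂ := Metric.ball (0 : ℂ) 1

/-- The map `σ_d : S → S`, `z ↦ z ^ d`. -/
def sigmaS (d : ℕ) (z : SPt) : SPt :=
  ⟨(z : ℂ) ^ d, by rw [norm_pow, z.2, one_pow]⟩

/-- A chord, identified with the unordered pair of its endpoints. -/
abbrev Chord : Type := Sym2 SPt

/-- The closed straight segment in `ℂ` spanned by a chord. -/
def chordSet : Chord → Set ℂ :=
  Sym2.lift ⟨fun a b => segment ℝ (a : ℂ) (b : ℂ), fun a b => segment_symm ℝ _ _⟩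

/-- The image chord `σ_d(ℓ)`. -/
def chordMap (d : ℕ) : Chord → Chord := Sym2.map (sigmaS d)

/-- Two (distinct) chords cross if they intersect in the open unit disk. -/
def Cross (c₁ c₂ : Chord) : Prop :=
  c₁ ≠ c₂ ∧ (chordSet c₁ ∩ chordSet c₂ ∩ openDisk).Nonempty

/-- The length `|ℓ|` of a chord: the normalized length of the shorter arc
subtended by its endpoints (total circle length 1). -/
def chordLength : Chord → ℝ :=
  Sym2.lift ⟨fun a b => |Complex.arg ((a : ℂ) / (b : ℂ))| / (2 * Real.pi), by
    intro a b
    dsimp only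
    have h : ((b : ℂ) / (a : ℂ)) = ((a : ℂ) / (b : ℂ))⁻¹ := (inv_div _ _).symm
    rw [h, Complex.arg_inv]
    split_ifs with hpi
    · rw [hpi]
    · rw [abs_neg]⟩

/-- A lamination: a family of pairwise non-crossing chords containing all
degenerate chords, whose union is compact. -/
structure Lamination : Type where
  leaves : Set Chord
  no_cross : ∀ ℓ₁ ∈ leaves, ∀ ℓ₂ ∈ leaves, ¬ Cross ℓ₁ ℓ₂
  diag_mem : ∀ z : SPt, Sym2.diag z ∈ leaves
  plus_compact : IsCompact (⋃ ℓ ∈ leaves, chordSet ℓ)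

/-- `Λ⁺`, the union of all leaves of `Λ`. -/
def Lamination.plus (Λ : Lamination) : Set ℂ := ⋃ ℓ ∈ Λ.leaves, chordSet ℓ

/-- Sibling `σ_d`-invariance of a lamination. -/
def Lamination.Invariant (Λ : Lamination) (d : ℕ) : Prop :=
  (∀ ℓ ∈ Λ.leaves, chordMap d ℓ ∈ Λ.leaves) ∧
  (∀ ℓ ∈ Λ.leaves, ∃ p ∈ Λ.leaves, chordMap d p = ℓ) ∧
  (∀ ℓ ∈ Λ.leaves, ¬ (chordMap d ℓ).IsDiag →
    ∃ s : Fin d → Chord, (∃ i, s i = ℓ) ∧ (∀ i, s i ∈ Λ.leaves) ∧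
      Function.Injective s ∧
      (∀ i j, i ≠ j → chordSet (s i) ∩ chordSet (s j) = ∅) ∧
      (∀ i, chordMap d (s i) = chordMap d ℓ))

/-- A lamination is nonempty if it has a nondegenerate leaf. -/
def Lamination.NonemptyLam (Λ : Lamination) : Prop := ∃ ℓ ∈ Λ.leaves, ¬ ℓ.IsDiag

/-- A gap of `Λ`: the closure of a connected component of `D ∖ Λ⁺`. -/
def IsGap (Λ : Lamination) (G : Set ℂ) : Prop :=
  ∃ x ∈ openDisk \ Λ.plus, G = closure (connectedComponentIn (openDisk \ Λ.plus) x)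

/-- A finite gap: a gap meeting the circle in finitely many points. -/
def FiniteGap (Λ : Lamination) (G : Set ℂ) : Prop := IsGap Λ G ∧ (G ∩ circleSet).Finite

/-- `ℓ` is an edge of `G`: a maximal nondegenerate straight segment (with
endpoints on the circle) contained in the boundary of `G`. -/
def IsEdge (G : Set ℂ) (ℓ : Chord) : Prop :=
  ¬ ℓ.IsDiag ∧ chordSet ℓ ⊆ frontier G ∧
    ∀ ℓ' : Chord, chordSet ℓ ⊆ chordSet ℓ' → chordSet ℓ' ⊆ frontier G →
      chordSet ℓ' = chordSet ℓ

/-- `σ_d(G)` for a set `G`: the convex hull of the image of `G ∩ S`. -/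
def gapImage (d : ℕ) (G : Set ℂ) : Set ℂ :=
  convexHull ℝ ((fun z : ℂ => z ^ d) '' (G ∩ circleSet))

/-- A lap of `Λ`: a finite gap, or (the segment of) a nondegenerate leaf not
contained in the boundary of a finite gap. -/
def IsLap (Λ : Lamination) (G : Set ℂ) : Prop :=
  FiniteGap Λ G ∨
    ∃ ℓ ∈ Λ.leaves, ¬ ℓ.IsDiag ∧ G = chordSet ℓ ∧
      ∀ H : Set ℂ, FiniteGap Λ H → ¬ chordSet ℓ ⊆ frontier H

/-- Distance between chords (Hausdorff distance between their segments). -/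
def chordDist (c₁ c₂ : Chord) : ℝ := Metric.hausdorffDist (chordSet c₁) (chordSet c₂)

/-- Hausdorff convergence `Λ_i → Λ` of laminations (leaf sets converge in the
Hausdorff metric on the compact space of chords). -/
def LamTendsto (Λi : ℕ → Lamination) (Λ : Lamination) : Prop :=
  ∀ ε > (0 : ℝ), ∀ᶠ n in atTop,
    (∀ ℓ ∈ (Λi n).leaves, ∃ ℓ' ∈ Λ.leaves, chordDist ℓ ℓ' < ε) ∧
    (∀ ℓ' ∈ Λ.leaves, ∃ ℓ ∈ (Λi n).leaves, chordDist ℓ ℓ' < ε)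

/-- An isolated leaf of `Λ`: some neighborhood of it in the space of chords
contains no other leaf of `Λ`. -/
def IsolatedLeaf (Λ : Lamination) (ℓ : Chord) : Prop :=
  ℓ ∈ Λ.leaves ∧ ∃ ε > (0 : ℝ), ∀ ℓ' ∈ Λ.leaves, chordDist ℓ' ℓ < ε → ℓ' = ℓ

/-- A perfect lamination: no isolated leaves. -/
def Lamination.PerfectLam (Λ : Lamination) : Prop := ∀ ℓ ∈ Λ.leaves, ¬ IsolatedLeaf Λ ℓ

/-- A set of chords closed under limits. -/
def ClosedChordSet (P : Set Chord) : Prop :=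
  ∀ f : ℕ → Chord, (∀ n, f n ∈ P) → ∀ c : Chord,
    Tendsto (fun n => chordDist (f n) c) atTop (nhds 0) → c ∈ P

/-- A perfect set of chords: closed and with no isolated points. -/
def PerfectChordSet (P : Set Chord) : Prop :=
  ClosedChordSet P ∧ ∀ c ∈ P, ∀ ε > (0 : ℝ), ∃ c' ∈ P, c' ≠ c ∧ chordDist c c' < ε

/-- The perfect part `Λᵖ` of `Λ`: the maximal perfect subset of its leaf set. -/
def perfectPart (Λ : Lamination) : Set Chord :=
  ⋃₀ {P : Set Chord | P ⊆ Λ.leaves ∧ PerfectChordSet P}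

/-- A countable lamination: countably many nondegenerate leaves. -/
def Lamination.CountableLam (Λ : Lamination) : Prop :=
  {ℓ ∈ Λ.leaves | ¬ ℓ.IsDiag}.Countable

/-- `Λc` is a chief of `Λ`: a minimal-by-inclusion nonempty sibling
`σ_d`-invariant sublamination of `Λ`. -/
def IsChiefOf (d : ℕ) (Λc Λ : Lamination) : Prop :=
  Λc.leaves ⊆ Λ.leaves ∧ Λc.Invariant d ∧ Λc.NonemptyLam ∧
    ∀ Λ' : Lamination, Λ'.leaves ⊆ Λc.leaves → Λ'.Invariant d → Λ'.NonemptyLam →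
      Λ'.leaves = Λc.leaves

/-- A clean lamination: distinct non-disjoint leaves lie on the boundary of a
common finite gap. -/
def Lamination.Clean (Λ : Lamination) : Prop :=
  ∀ ℓ₁ ∈ Λ.leaves, ∀ ℓ₂ ∈ Λ.leaves, ℓ₁ ≠ ℓ₂ → (chordSet ℓ₁ ∩ chordSet ℓ₂).Nonempty →
    ∃ G : Set ℂ, FiniteGap Λ G ∧ chordSet ℓ₁ ⊆ frontier G ∧ chordSet ℓ₂ ⊆ frontier G

/-- A limit lamination: a sibling `σ_3`-invariant lamination that is a limit of
clean sibling `σ_3`-invariant laminations. -/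
def IsLimitLam (Λ : Lamination) : Prop :=
  Λ.Invariant 3 ∧
    ∃ Λi : ℕ → Lamination, (∀ n, (Λi n).Invariant 3 ∧ (Λi n).Clean) ∧ LamTendsto Λi Λ

/-- A chief: a chief of some nonempty limit lamination. -/
def IsChief (Λc : Lamination) : Prop :=
  ∃ Λ : Lamination, IsLimitLam Λ ∧ Λ.NonemptyLam ∧ IsChiefOf 3 Λc Λ

/-- A `σ_3`-critical chord. -/
def IsCritChord (c : Chord) : Prop := ¬ c.IsDiag ∧ (chordMap 3 c).IsDiag

/-- An unordered pair of chords (candidate critical portrait). -/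
abbrev Portrait : Type := Sym2 Chord

/-- A cubic critical portrait: an unordered pair of non-crossing
`σ_3`-critical chords. -/
def IsPortrait (K : Portrait) : Prop :=
  ∃ c y : Chord, K = s(c, y) ∧ IsCritChord c ∧ IsCritChord y ∧ ¬ Cross c y

/-- The space `CrP` of all cubic critical portraits. -/
def CrP : Set Portrait := {K | IsPortrait K}

/-- `I(ℓ)` for a critical chord `ℓ`: the open arc of length 1/3 cut off by `ℓ`
(the points of the circle strictly separated from the center by `ℓ`). -/
def Iarc (ℓ : Chord) : Set SPt :=
  {z : SPt | (z : ℂ) ∉ chordSet ℓ ∧ (segment ℝ (0 : ℂ) (z : ℂ) ∩ chordSet ℓ).Nonempty}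

/-- The forward orbit `{σ_3ⁿ(ℓ) : n ≥ 1}` of a critical chord `ℓ` (each image
is a single point of the circle). -/
def critOrbit (ℓ : Chord) : Set SPt :=
  {z : SPt | ∃ n, 1 ≤ n ∧ ∃ a ∈ ℓ, (sigmaS 3)^[n] a = z}

/-- A weak critical portrait. -/
def IsWeak (K : Portrait) : Prop :=
  IsPortrait K ∧ ∃ c y : Chord, K = s(c, y) ∧
    (critOrbit c ∩ Iarc y = ∅ ∨ critOrbit y ∩ Iarc c = ∅)

/-- A strong critical portrait. -/
def IsStrong (K : Portrait) : Prop := IsPortrait K ∧ ¬ IsWeak K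

/-- Distance between (critical) portraits, metrizing convergence of the
unordered pairs of chords. -/
def portraitDist : Portrait → Portrait → ℝ :=
  Sym2.lift₂ ⟨fun a b c d =>
      min (max (chordDist a c) (chordDist b d)) (max (chordDist a d) (chordDist b c)), by
    intro a₁ a₂ b₁ b₂
    constructor
    · dsimp only
      rw [min_comm, max_comm (chordDist a₁ b₂), max_comm (chordDist a₁ b₁)]
    · dsimp only
      rw [min_comm]⟩

/-- Convergence `K_i → K` in `CrP`. -/
def PortraitTendsto (f : ℕ → Portrait) (K : Portrait) : Prop :=
  Tendsto (fun n => portraitDist (f n) K) atTop (nhds 0)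

/-- A critical portrait is compatible with a lamination if none of its chords
crosses a leaf. -/
def Compat (K : Portrait) (Λ : Lamination) : Prop :=
  ∀ c ∈ K, ∀ ℓ ∈ Λ.leaves, ¬ Cross c ℓ

/-- `C(Λ)`: the set of critical portraits compatible with `Λ`. -/
def CC (Λ : Lamination) : Set Portrait := {K | K ∈ CrP ∧ Compat K Λ}

/-- Friendship of critical portraits: both compatible with a common nonempty
limit lamination. -/
def Friends (K₁ K₂ : Portrait) : Prop :=
  ∃ Λ : Lamination, IsLimitLam Λ ∧ Λ.NonemptyLam ∧ K₁ ∈ CC Λ ∧ K₂ ∈ CC Λ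

/-- A prime critical portrait: some friend of it has a weak friend. -/
def IsPrime (K : Portrait) : Prop :=
  ∃ K' K'' : Portrait, Friends K K' ∧ Friends K' K'' ∧ IsWeak K''

/-- A regular chief: a chief all of whose critical portraits have only strong
friends. -/
def RegularChief (Λ : Lamination) : Prop :=
  IsChief Λ ∧ ∀ K ∈ CC Λ, ∀ K' : Portrait, Friends K K' → IsStrong K'

/-- A regular lamination: one having a regular chief. -/
def RegularLam (Λ : Lamination) : Prop :=
  ∃ Λc : Lamination, IsChiefOf 3 Λc Λ ∧ RegularChief Λc

/-- A regular critical portrait: one compatible with a regular chief. -/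
def RegularPortrait (K : Portrait) : Prop :=
  ∃ Λ : Lamination, RegularChief Λ ∧ K ∈ CC Λ

/-- Rotation of a circle point by angle `2πt`. -/
def rotPt (t : ℝ) (a : SPt) : SPt :=
  ⟨Complex.exp ((t * (2 * Real.pi) : ℝ) * Complex.I) * (a : ℂ), by
    rw [norm_mul, a.2, mul_one, Complex.norm_exp_ofReal_mul_I]⟩

/-- Circular betweenness: `b` lies on the (closed) counterclockwise arc from
`a` to `c` (and `a`, `b`, `c` occur in this counterclockwise order). -/
def CBtw (a b c : SPt) : Prop :=
  ∃ s t : ℝ, 0 ≤ s ∧ s ≤ t ∧ t < 1 ∧ b = rotPt s a ∧ c = rotPt t a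

/-- An invariant gap: a gap `G` of some sibling `σ_3`-invariant lamination
with `σ_3(G) = G`. -/
def IsInvGap (G : Set ℂ) : Prop :=
  ∃ Λ : Lamination, Λ.Invariant 3 ∧ IsGap Λ G ∧ gapImage 3 G = G

/-- An infinite gap (meets the circle in infinitely many points). -/
def InfiniteGapSet (G : Set ℂ) : Prop := (G ∩ circleSet).Infinite

/-- Two circle points lie in the closure of a common complementary arc of
`G ∩ S` (or coincide): the fibers of the edge-collapsing map of `∂G`. -/
def complArcFiber (G : Set ℂ) (z w : SPt) : Prop :=
  z = w ∨ ∃ x : SPt, (x : ℂ) ∉ G ∧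
    z ∈ closure (connectedComponentIn {y : SPt | (y : ℂ) ∉ G} x) ∧
    w ∈ closure (connectedComponentIn {y : SPt | (y : ℂ) ∉ G} x)

/-- A quadratic invariant gap: an infinite invariant gap of degree 2, i.e.
after collapsing the complementary arcs (edges) of its boundary, `σ_3` induces
a two-to-one covering map of the circle. -/
def QuadGap (G : Set ℂ) : Prop :=
  IsInvGap G ∧ InfiniteGapSet G ∧
    ∃ φ : SPt → SPt, Continuous φ ∧ Function.Surjective φ ∧
      (∀ z w : SPt, φ z = φ w ↔ complArcFiber G z w) ∧
      ∃ g : SPt → SPt, IsCoveringMap g ∧ (∀ w : SPt, Nat.card (g ⁻¹' {w}) = 2) ∧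
        ∀ z : SPt, (z : ℂ) ∈ G → φ (sigmaS 3 z) = g (φ z)

/-- A critical portrait is compatible with a gap if none of its chords crosses
an edge of the gap. -/
def CompatGap (K : Portrait) (G : Set ℂ) : Prop :=
  ∀ c ∈ K, ∀ ℓ : Chord, IsEdge G ℓ → ¬ Cross c ℓ

/-- A set of portraits closed in `CrP`. -/
def ClosedPortraitSet (A : Set Portrait) : Prop :=
  ∀ f : ℕ → Portrait, (∀ n, f n ∈ A) → ∀ K ∈ CrP, PortraitTendsto f K → K ∈ A

/-- A finite rotational lap: a finite lap on which `σ_3` acts as a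
combinatorial rotation of the vertices. -/
def RotationalLap (Λ : Lamination) (G : Set ℂ) : Prop :=
  IsLap Λ G ∧ (G ∩ circleSet).Finite ∧ gapImage 3 G = G ∧
    (∀ z : SPt, (z : ℂ) ∈ G → ((sigmaS 3 z : SPt) : ℂ) ∈ G) ∧
    ∀ a b c : SPt, (a : ℂ) ∈ G → (b : ℂ) ∈ G → (c : ℂ) ∈ G →
      CBtw a b c → CBtw (sigmaS 3 a) (sigmaS 3 b) (sigmaS 3 c)

/-!
Let `G(ℓ)` be the set of pullbacks of the nondegenerate images of `ℓ`. Its closure, together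
with the degenerate chords, is again a sibling `σ_d`-invariant sublamination of `Λ`:
* the leaf set of a lamination is closed: the midpoint of a nondegenerate limit of leaves lies on
  a leaf, as `Λ⁺` is closed, and a leaf through an interior point of a chord, other than that
  chord, crosses every chord near it;
* images and preimages pass to the closure by continuity of `σ_d` and compactness;
* sibling families pass to limits, because distinct `σ_d`-preimages of a point are uniformly
  separated, so limiting siblings keep distinct endpoints, and non-crossing chords without common
  endpoints are disjoint.
Since `Λ` is a chief, that sublamination is `Λ` itself, i.e. `G(ℓ)` is dense in `Λ`.
Closures are taken in the compact space `SPt × SPt` of ordered endpoint pairs, where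
`chordDist s(p.1, p.2) s(q.1, q.2) ≤ dist p q`.
-/

open Set Topology

section StrictlyConvex

variable {E : Type*} [NormedAddCommGroup E] [NormedSpace ℝ E]

lemma mem_openSegment_of_norm_lt_one {u v z : E} (hu : ‖u‖ = 1) (hv : ‖v‖ = 1)
    (hz : z ∈ segment ℝ u v) (hz1 : ‖z‖ < 1) : u ≠ v ∧ z ∈ openSegment ℝ u v := by
  rw [← insert_endpoints_openSegment] at hz
  rcases hz with rfl | rfl | hz
  · exact absurd hu hz1.ne
  · exact absurd hv hz1.ne
  · refine ⟨?_, hz⟩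
    rintro rfl
    rw [openSegment_same, mem_singleton_iff] at hz
    exact absurd hu (hz ▸ hz1.ne)

variable [StrictConvexSpace ℝ E]

lemma norm_lt_one_of_mem_openSegment {a b z : E} (ha : ‖a‖ ≤ 1) (hb : ‖b‖ ≤ 1) (hab : a ≠ b)
    (hz : z ∈ openSegment ℝ a b) : ‖z‖ < 1 := by
  obtain ⟨s, t, hs, ht, hst, rfl⟩ := hz
  exact norm_combo_lt_of_ne ha hb hab hs ht hst

lemma eq_or_eq_of_mem_segment_of_norm_eq_one {a b z : E} (ha : ‖a‖ ≤ 1) (hb : ‖b‖ ≤ 1)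
    (hz : z ∈ segment ℝ a b) (hz1 : ‖z‖ = 1) : z = a ∨ z = b := by
  rw [← insert_endpoints_openSegment] at hz
  rcases hz with rfl | rfl | hz
  · exact Or.inl rfl
  · exact Or.inr rfl
  · obtain rfl | hab := eq_or_ne a b
    · rw [openSegment_same] at hz
      exact Or.inl hz
    · exact absurd hz1 (norm_lt_one_of_mem_openSegment ha hb hab hz).ne

end StrictlyConvex

def planeDet (z w : ℂ) : ℝ := z.re * w.im - z.im * w.re

@[fun_prop]
lemma continuous_planeDet : Continuous fun p : ℂ × ℂ => planeDet p.1 p.2 := by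
  unfold planeDet; fun_prop

lemma planeDet_smul_eq (e f w : ℂ) :
    planeDet e f • w = planeDet w f • e + planeDet e w • f := by
  apply Complex.ext <;>
    simp only [planeDet, Complex.add_re, Complex.add_im, Complex.smul_re, Complex.smul_im,
      smul_eq_mul] <;> ring

lemma exists_eq_smul_of_planeDet_eq_zero {z w : ℂ} (h : planeDet z w = 0) (hz : z ≠ 0) :
    ∃ r : ℝ, w = r • z := by
  have hn : Complex.normSq z ≠ 0 := Complex.normSq_eq_zero.not.2 hz
  have key : Complex.normSq z • w = (z.re * w.re + z.im * w.im) • z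
      + planeDet z w • (Complex.I * z) := by
    apply Complex.ext <;>
      simp only [planeDet, Complex.normSq_apply, Complex.add_re, Complex.add_im,
        Complex.smul_re, Complex.smul_im, Complex.I_mul_re, Complex.I_mul_im, smul_eq_mul] <;> ring
  refine ⟨(z.re * w.re + z.im * w.im) / Complex.normSq z, ?_⟩
  rw [h, zero_smul, add_zero] at key
  rw [div_eq_inv_mul, mul_smul, ← key, inv_smul_smul₀ hn]

lemma eq_or_eq_of_eq_add_smul_sub {E : Type*} [NormedAddCommGroup E] [InnerProductSpace ℝ E]
    {a b z : E} (ha : ‖a‖ = 1) (hb : ‖b‖ = 1) (hz : ‖z‖ = 1) {r : ℝ} (hr : z = a + r • (b - a)) :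
    z = a ∨ z = b := by
  by_contra! h
  obtain rfl | hab := eq_or_ne a b
  · simp only [sub_self, smul_zero, add_zero] at hr
    exact h.1 hr
  have hcos : EuclideanGeometry.Cospherical ({a, b, z} : Set E) := ⟨0, 1, by simp [ha, hb, hz]⟩
  refine affineIndependent_iff_not_collinear_set.1
    (hcos.affineIndependent_of_ne hab h.1.symm h.2.symm) ?_
  rw [collinear_iff_of_mem (mem_insert a _)]
  refine ⟨b - a, ?_⟩
  simp only [mem_insert_iff, mem_singleton_iff, forall_eq_or_imp, forall_eq]
  exact ⟨⟨0, by simp⟩, ⟨1, by simp⟩, ⟨r, by rw [hr, vadd_eq_add, add_comm]⟩⟩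

lemma eventually_planeDet_ne_zero_and_segment_inter_openSegment {a b u v x : ℂ}
    (hx : x ∈ openSegment ℝ a b) (hx' : x ∈ openSegment ℝ u v)
    (hΔ : planeDet (b - a) (v - u) ≠ 0) :
    ∀ᶠ r : ℂ × ℂ in 𝓝 (a, b),
      planeDet (r.2 - r.1) (v - u) ≠ 0 ∧ (segment ℝ r.1 r.2 ∩ openSegment ℝ u v).Nonempty := by
  rw [openSegment_eq_image'] at hx hx'
  obtain ⟨t, ht, rfl⟩ := hx
  obtain ⟨s, hs, hst⟩ := hx'
  set f := v - u
  -- Cramer's rule for the intersection `r.1 + T r • (r.2 - r.1) = u + W r • f` of the two lines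
  set D : ℂ × ℂ → ℝ := fun r => planeDet (r.2 - r.1) f
  set T : ℂ × ℂ → ℝ := fun r => planeDet (u - r.1) f / D r
  set W : ℂ × ℂ → ℝ := fun r => -planeDet (r.2 - r.1) (u - r.1) / D r
  have hua : u - a = t • (b - a) - s • f := by
    simp only at hst
    rw [← sub_eq_zero, ← sub_eq_zero.2 hst]; abel
  have hD : ContinuousAt D (a, b) := by fun_prop
  have hT : ContinuousAt T (a, b) := by fun_prop (disch := exact hΔ)
  have hW : ContinuousAt W (a, b) := by fun_prop (disch := exact hΔ)
  have hTab : T (a, b) = t := by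
    have : planeDet (u - a) f = t * planeDet (b - a) f := by
      rw [hua]
      simp only [planeDet, Complex.sub_re, Complex.sub_im, Complex.smul_re, Complex.smul_im,
        smul_eq_mul]
      ring
    simp only [T, D, this]
    field_simp
  have hWab : W (a, b) = s := by
    have : planeDet (b - a) (u - a) = -s * planeDet (b - a) f := by
      rw [hua]
      simp only [planeDet, Complex.sub_re, Complex.sub_im, Complex.smul_re, Complex.smul_im,
        smul_eq_mul]
      ring
    simp only [W, D, this]
    field_simp
  filter_upwards [hD.eventually_ne hΔ, hT.eventually_mem (Ioo_mem_nhds (hTab ▸ ht.1) (hTab ▸ ht.2)),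
    hW.eventually_mem (Ioo_mem_nhds (hWab ▸ hs.1) (hWab ▸ hs.2))] with r hDr hTr hWr
  refine ⟨hDr, u + W r • f, ?_, by rw [openSegment_eq_image']; exact ⟨W r, hWr, rfl⟩⟩
  rw [segment_eq_image']
  refine ⟨T r, Ioo_subset_Icc_self hTr, ?_⟩
  have hu : u - r.1 = (D r)⁻¹ •
      (planeDet (u - r.1) f • (r.2 - r.1) + planeDet (r.2 - r.1) (u - r.1) • f) := by
    rw [← planeDet_smul_eq, smul_smul, inv_mul_cancel₀ hDr, one_smul]
  simp only [T, W, div_eq_inv_mul]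
  linear_combination (norm := module) -hu

instance : CompactSpace SPt :=
  (isCompact_iff_compactSpace (s := {z : ℂ | ‖z‖ = 1})).mp <| by
    simpa [Metric.sphere, dist_zero_right] using isCompact_sphere (0 : ℂ) 1

@[fun_prop]
lemma continuous_sigmaS (d : ℕ) : Continuous (sigmaS d) := by
  unfold sigmaS; fun_prop

lemma sigmaS_surjective {d : ℕ} (hd : d ≠ 0) : Function.Surjective (sigmaS d) := by
  intro z
  have hw : ((z : ℂ) ^ ((d : ℂ)⁻¹)) ^ d = z := Complex.cpow_nat_inv_pow _ hd
  have hnorm : ‖(z : ℂ) ^ ((d : ℂ)⁻¹)‖ = 1 := by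
    rw [← pow_eq_one_iff_of_nonneg (norm_nonneg _) hd, ← norm_pow, hw, z.2]
  exact ⟨⟨_, hnorm⟩, Subtype.ext hw⟩

lemma exists_pos_le_dist_of_sigmaS_eq {d : ℕ} (hd : 0 < d) :
    ∃ δ > 0, ∀ x y : SPt, sigmaS d x = sigmaS d y → x ≠ y → δ ≤ dist x y := by
  set R : Set ℂ := {ζ | ζ ^ d = 1 ∧ ζ ≠ 1}
  have hR : IsClosed R := by
    refine Set.Finite.isClosed ((Polynomial.nthRootsFinset d (1 : ℂ)).finite_toSet.subset ?_)
    intro ζ hζ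
    exact (Polynomial.mem_nthRootsFinset hd 1).2 hζ.1
  obtain ⟨δ, hδ, hball⟩ := Metric.isOpen_iff.1 hR.isOpen_compl 1 (by simp [R])
  refine ⟨δ, hδ, fun x y hxy hne => not_lt.1 fun hlt => ?_⟩
  have hy : (y : ℂ) ≠ 0 := ne_zero_of_norm_ne_zero (by rw [y.2]; exact one_ne_zero)
  have hmem : (x : ℂ) / y ∈ R := by
    refine ⟨?_, fun h => hne (Subtype.ext ((div_eq_one_iff_eq hy).1 h))⟩
    rw [div_pow, div_eq_one_iff_eq (pow_ne_zero _ hy)]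
    exact congrArg Subtype.val hxy
  have hdist : dist ((x : ℂ) / y) 1 = dist x y := by
    rw [Subtype.dist_eq, Complex.dist_eq, Complex.dist_eq, div_sub_one hy, norm_div, y.2, div_one]
  exact hball (mem_ball.2 (hdist ▸ hlt)) hmem

def sigmaPair (d : ℕ) : SPt × SPt → SPt × SPt := Prod.map (sigmaS d) (sigmaS d)

@[fun_prop]
lemma continuous_sigmaPair (d : ℕ) : Continuous (sigmaPair d) := by
  unfold sigmaPair; fun_prop

lemma exists_mk_eq_of_chordMap_eq {d : ℕ} {c : Chord} {p : SPt × SPt}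
    (h : chordMap d c = s(p.1, p.2)) : ∃ q : SPt × SPt, s(q.1, q.2) = c ∧ sigmaPair d q = p := by
  induction c using Sym2.ind with | _ x y => ?_
  rcases Sym2.eq_iff.1 h with ⟨h1, h2⟩ | ⟨h1, h2⟩
  · exact ⟨(x, y), rfl, Prod.ext h1 h2⟩
  · exact ⟨(y, x), Sym2.eq_swap, Prod.ext h2 h1⟩

lemma chordSet_mk (p : SPt × SPt) : chordSet s(p.1, p.2) = segment ℝ (p.1 : ℂ) p.2 := rfl

lemma norm_le_one_of_mem_chordSet {c : Chord} {z : ℂ} (hz : z ∈ chordSet c) : ‖z‖ ≤ 1 := by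
  induction c using Sym2.ind with | _ a b => ?_
  simpa using (convex_closedBall (0 : ℂ) 1).segment_subset (by simp [a.2]) (by simp [b.2]) hz

lemma chordSet_inter_eq_empty {c c' : Chord} (hcross : ¬ Cross c c')
    (hend : ∀ x ∈ c, ∀ y ∈ c', x ≠ y) : chordSet c ∩ chordSet c' = ∅ := by
  refine eq_empty_of_forall_notMem fun z ⟨hz, hz'⟩ => ?_
  obtain hlt | heq := (norm_le_one_of_mem_chordSet hz).lt_or_eq
  · refine hcross ⟨?_, z, ⟨hz, hz'⟩, mem_ball_zero_iff.2 hlt⟩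
    rintro rfl
    induction c using Sym2.ind with
    | _ a b => exact hend a (Sym2.mem_mk_left a b) a (Sym2.mem_mk_left a b) rfl
  · induction c using Sym2.ind with | _ a b => ?_
    induction c' using Sym2.ind with | _ u v => ?_
    set w : SPt := ⟨z, heq⟩
    refine hend w ?_ w ?_ rfl
    · rcases eq_or_eq_of_mem_segment_of_norm_eq_one a.2.le b.2.le hz heq with h | h
      · exact Sym2.mem_iff.2 (Or.inl (Subtype.ext h))
      · exact Sym2.mem_iff.2 (Or.inr (Subtype.ext h))
    · rcases eq_or_eq_of_mem_segment_of_norm_eq_one u.2.le v.2.le hz' heq with h | h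
      · exact Sym2.mem_iff.2 (Or.inl (Subtype.ext h))
      · exact Sym2.mem_iff.2 (Or.inr (Subtype.ext h))

lemma eventually_cross {a b u v : SPt} (hab : a ≠ b) {x : ℂ} (hx : x ∈ openSegment ℝ (a : ℂ) b)
    (hxuv : x ∈ chordSet s(u, v)) (hne : s(u, v) ≠ s(a, b)) :
    ∀ᶠ r in 𝓝 (a, b), Cross s(r.1, r.2) s(u, v) := by
  have hab' : (a : ℂ) ≠ b := fun h => hab (Subtype.ext h)
  obtain ⟨huv, hx'⟩ := mem_openSegment_of_norm_lt_one u.2 v.2 hxuv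
    (norm_lt_one_of_mem_openSegment a.2.le b.2.le hab' hx)
  by_cases hΔ : planeDet ((b : ℂ) - a) ((v : ℂ) - u) = 0
  · -- both chords lie on one line, which meets the circle only at `a` and `b`
    exfalso
    apply hne
    obtain ⟨ρ, hρ⟩ := exists_eq_smul_of_planeDet_eq_zero hΔ (sub_ne_zero.2 hab'.symm)
    rw [openSegment_eq_image'] at hx hx'
    obtain ⟨t, -, rfl⟩ := hx
    obtain ⟨s, -, hs⟩ := hx'
    simp only [hρ] at hs
    have hu : (u : ℂ) = a + (t - s * ρ) • ((b : ℂ) - a) := by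
      linear_combination (norm := module) hs
    have hv : (v : ℂ) = a + (t - s * ρ + ρ) • ((b : ℂ) - a) := by
      linear_combination (norm := module) hs + hρ
    rcases eq_or_eq_of_eq_add_smul_sub a.2 b.2 u.2 hu with h1 | h1 <;>
      rcases eq_or_eq_of_eq_add_smul_sub a.2 b.2 v.2 hv with h2 | h2
    · exact absurd (h1.trans h2.symm) huv
    · rw [Subtype.ext h1, Subtype.ext h2]
    · rw [Subtype.ext h1, Subtype.ext h2, Sym2.eq_swap]
    · exact absurd (h1.trans h2.symm) huv
  · have hcont : Continuous fun r : SPt × SPt => ((r.1 : ℂ), (r.2 : ℂ)) := by fun_prop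
    filter_upwards [(hcont.tendsto (a, b)).eventually
      (eventually_planeDet_ne_zero_and_segment_inter_openSegment hx hx' hΔ)]
      with r ⟨hDr, z, hz, hz'⟩
    refine ⟨fun h => hDr ?_, z, ⟨hz, openSegment_subset_segment _ _ _ hz'⟩,
      mem_ball_zero_iff.2 (norm_lt_one_of_mem_openSegment u.2.le v.2.le huv hz')⟩
    rcases Sym2.eq_iff.1 h with ⟨h1, h2⟩ | ⟨h1, h2⟩
    · rw [h1, h2]; simp only [planeDet, Complex.sub_re, Complex.sub_im]; ring
    · rw [h1, h2]; simp only [planeDet, Complex.sub_re, Complex.sub_im]; ring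

lemma exists_dist_le_of_mem_chordSet {p q : SPt × SPt} {z : ℂ} (hz : z ∈ chordSet s(p.1, p.2)) :
    ∃ z' ∈ chordSet s(q.1, q.2), dist z z' ≤ dist p q := by
  rw [chordSet_mk, segment_eq_image] at hz
  obtain ⟨t, ht, rfl⟩ := hz
  refine ⟨(1 - t) • (q.1 : ℂ) + t • (q.2 : ℂ), ?_, ?_⟩
  · rw [chordSet_mk, segment_eq_image]
    exact ⟨t, ht, rfl⟩
  have h1 : (p.1 : ℂ) - q.1 ∈ closedBall 0 (dist p q) := by
    rw [mem_closedBall_zero_iff, ← dist_eq_norm, ← Subtype.dist_eq, Prod.dist_eq]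
    exact le_max_left _ _
  have h2 : (p.2 : ℂ) - q.2 ∈ closedBall 0 (dist p q) := by
    rw [mem_closedBall_zero_iff, ← dist_eq_norm, ← Subtype.dist_eq, Prod.dist_eq]
    exact le_max_right _ _
  have hcombo := convex_closedBall (0 : ℂ) (dist p q) h1 h2 (sub_nonneg.2 ht.2) ht.1
    (sub_add_cancel 1 t)
  rw [mem_closedBall_zero_iff] at hcombo
  calc dist _ _ = ‖(1 - t) • ((p.1 : ℂ) - q.1) + t • ((p.2 : ℂ) - q.2)‖ := by
        rw [dist_eq_norm]; congr 1; module
    _ ≤ dist p q := hcombo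

lemma chordDist_le_dist (p q : SPt × SPt) : chordDist s(p.1, p.2) s(q.1, q.2) ≤ dist p q :=
  hausdorffDist_le_of_mem_dist dist_nonneg (fun _ hz => exists_dist_le_of_mem_chordSet hz)
    fun _ hz => by simpa only [dist_comm p q] using exists_dist_le_of_mem_chordSet hz

lemma isCompact_biUnion_chordSet {K : Set (SPt × SPt)} (hK : IsCompact K) :
    IsCompact (⋃ p ∈ K, chordSet s(p.1, p.2)) := by
  simp only [chordSet_mk, segment_eq_image_lineMap, iUnion_image_left, ← image_prod]
  exact (hK.prod isCompact_Icc).image (by fun_prop)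

lemma Lamination.isClosed_leaves (Λ : Lamination) : IsClosed (Sym2.mk.uncurry ⁻¹' Λ.leaves) := by
  refine isClosed_of_closure_subset fun p hp => ?_
  obtain ⟨a, b⟩ := p
  obtain rfl | hab := eq_or_ne a b
  · exact Λ.diag_mem a
  by_contra hpΛ
  let mid (q : SPt × SPt) : ℂ := (q.1 : ℂ) + (1 / 2 : ℝ) • ((q.2 : ℂ) - q.1)
  have hx : mid (a, b) ∈ openSegment ℝ (a : ℂ) b := by
    rw [openSegment_eq_image']; exact ⟨1 / 2, ⟨by norm_num, by norm_num⟩, rfl⟩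
  have hxΛ : mid (a, b) ∈ Λ.plus := by
    refine Λ.plus_compact.isClosed.closure_subset (map_mem_closure (by fun_prop) hp fun q hq => ?_)
    refine mem_biUnion hq ?_
    rw [Function.uncurry_apply_pair, chordSet_mk, segment_eq_image']
    exact ⟨1 / 2, ⟨by norm_num, by norm_num⟩, rfl⟩
  obtain ⟨q, hq, hxq⟩ := mem_iUnion₂.1 hxΛ
  induction q using Sym2.ind with | _ u v => ?_
  have hne : s(u, v) ≠ s(a, b) := fun h => hpΛ (show s(a, b) ∈ Λ.leaves from h ▸ hq)
  obtain ⟨r, hcross, hr⟩ := mem_closure_iff_nhds.1 hp _ (eventually_cross hab hx hxq hne)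
  exact Λ.no_cross _ hr _ hq hcross

/-- `Lamination.Invariant`, for an arbitrary set of chords. -/
def IsSiblingInvariant (d : ℕ) (S : Set Chord) : Prop :=
  (∀ ℓ ∈ S, chordMap d ℓ ∈ S) ∧
  (∀ ℓ ∈ S, ∃ p ∈ S, chordMap d p = ℓ) ∧
  (∀ ℓ ∈ S, ¬ (chordMap d ℓ).IsDiag →
    ∃ s : Fin d → Chord, (∃ i, s i = ℓ) ∧ (∀ i, s i ∈ S) ∧
      Function.Injective s ∧
      (∀ i j, i ≠ j → chordSet (s i) ∩ chordSet (s j) = ∅) ∧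
      (∀ i, chordMap d (s i) = chordMap d ℓ))

namespace Lamination

variable {Λ : Lamination} {S : Set Chord}

lemma closure_preimage_subset (hS : S ⊆ Λ.leaves) :
    closure (Sym2.mk.uncurry ⁻¹' S) ⊆ Sym2.mk.uncurry ⁻¹' Λ.leaves :=
  closure_minimal (preimage_mono hS) Λ.isClosed_leaves

def restrictClosure (Λ : Lamination) (S : Set Chord) (hS : S ⊆ Λ.leaves)
    (hdiag : ∀ z, s(z, z) ∈ S) : Lamination where
  leaves := Sym2.mk.uncurry '' closure (Sym2.mk.uncurry ⁻¹' S)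
  no_cross := by
    rintro _ ⟨p, hp, rfl⟩ _ ⟨q, hq, rfl⟩
    exact Λ.no_cross _ (closure_preimage_subset hS hp) _ (closure_preimage_subset hS hq)
  diag_mem z := ⟨(z, z), subset_closure (hdiag z), rfl⟩
  plus_compact := by
    rw [biUnion_image]
    exact isCompact_biUnion_chordSet isClosed_closure.isCompact

lemma restrictClosure_subset (hS : S ⊆ Λ.leaves) (hdiag : ∀ z, s(z, z) ∈ S) :
    (Λ.restrictClosure S hS hdiag).leaves ⊆ Λ.leaves := by
  rintro _ ⟨p, hp, rfl⟩
  exact closure_preimage_subset hS hp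

lemma subset_restrictClosure (hS : S ⊆ Λ.leaves) (hdiag : ∀ z, s(z, z) ∈ S) :
    S ⊆ (Λ.restrictClosure S hS hdiag).leaves := by
  intro c hc
  induction c using Sym2.ind with | _ a b => exact ⟨(a, b), subset_closure hc, rfl⟩

end Lamination

section ClosureInvariance

variable {d : ℕ} {S : Set Chord}

lemma mapsTo_sigmaPair_closure (hS : ∀ c ∈ S, chordMap d c ∈ S) :
    MapsTo (sigmaPair d) (closure (Sym2.mk.uncurry ⁻¹' S)) (closure (Sym2.mk.uncurry ⁻¹' S)) :=
  MapsTo.closure (fun _ hp => hS _ hp) (continuous_sigmaPair d)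

lemma closure_subset_image_sigmaPair (hS : ∀ c ∈ S, ∃ p ∈ S, chordMap d p = c) :
    closure (Sym2.mk.uncurry ⁻¹' S) ⊆ sigmaPair d '' closure (Sym2.mk.uncurry ⁻¹' S) := by
  refine closure_minimal (fun p hp => ?_)
    (isClosed_closure.isCompact.image (continuous_sigmaPair d)).isClosed
  obtain ⟨c, hc, hcp⟩ := hS _ hp
  obtain ⟨q, rfl, hq⟩ := exists_mk_eq_of_chordMap_eq hcp
  exact ⟨q, subset_closure hc, hq⟩

def IsSeparatedSiblings (d : ℕ) (δ : ℝ) (p : SPt × SPt) (t : Fin d → SPt × SPt) : Prop :=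
  (∃ i, t i = p) ∧ ∀ i, sigmaPair d (t i) = sigmaPair d p ∧
    ∀ j, i ≠ j → δ ≤ dist (t i).1 (t j).1 ∧ δ ≤ dist (t i).2 (t j).2

lemma isClosed_setOf_isSeparatedSiblings (δ : ℝ) :
    IsClosed {x : (SPt × SPt) × (Fin d → SPt × SPt) | IsSeparatedSiblings d δ x.1 x.2} := by
  simp only [IsSeparatedSiblings, ofPred_and, ofPred_forall, ofPred_exists]
  exact (isClosed_iUnion_of_finite fun i => isClosed_eq (by fun_prop) (by fun_prop)).inter
    (isClosed_iInter fun i => (isClosed_eq (by fun_prop) (by fun_prop)).inter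
      (isClosed_iInter fun j => isClosed_iInter fun _ =>
        (isClosed_le (by fun_prop) (by fun_prop)).inter (isClosed_le (by fun_prop) (by fun_prop))))

lemma exists_isSeparatedSiblings {δ : ℝ}
    (hsep : ∀ x y : SPt, sigmaS d x = sigmaS d y → x ≠ y → δ ≤ dist x y)
    (hS : IsSiblingInvariant d S) {g : SPt × SPt} (hg : s(g.1, g.2) ∈ S)
    (hnd : sigmaS d g.1 ≠ sigmaS d g.2) :
    ∃ t, IsSeparatedSiblings d δ g t ∧ ∀ i, s((t i).1, (t i).2) ∈ S := by
  obtain ⟨s, ⟨i₀, hi₀⟩, hsS, -, hdisj, hsmap⟩ := hS.2.2 _ hg (mt Sym2.mk_isDiag_iff.1 hnd)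
  have hlift : ∀ i, ∃ q : SPt × SPt, s(q.1, q.2) = s i ∧ sigmaPair d q = sigmaPair d g ∧
      (i = i₀ → q = g) := by
    intro i
    obtain rfl | hi := eq_or_ne i i₀
    · exact ⟨g, hi₀.symm, rfl, fun _ => rfl⟩
    · obtain ⟨q, hq, hσ⟩ := exists_mk_eq_of_chordMap_eq (p := sigmaPair d g) (hsmap i)
      exact ⟨q, hq, hσ, fun h => absurd h hi⟩
  choose t ht hσ ht₀ using hlift
  have hmem : ∀ i, ((t i).1 : ℂ) ∈ chordSet (s i) ∧ ((t i).2 : ℂ) ∈ chordSet (s i) := fun i =>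
    ht i ▸ ⟨left_mem_segment ℝ _ _, right_mem_segment ℝ _ _⟩
  have hne : ∀ i j, i ≠ j → (t i).1 ≠ (t j).1 ∧ (t i).2 ≠ (t j).2 := fun i j hij =>
    ⟨fun h => eq_empty_iff_forall_notMem.1 (hdisj i j hij) _ ⟨(hmem i).1, h ▸ (hmem j).1⟩,
      fun h => eq_empty_iff_forall_notMem.1 (hdisj i j hij) _ ⟨(hmem i).2, h ▸ (hmem j).2⟩⟩
  refine ⟨t, ⟨⟨i₀, ht₀ i₀ rfl⟩, fun i => ⟨hσ i, fun j hij => ⟨?_, ?_⟩⟩⟩, fun i => ht i ▸ hsS i⟩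
  · exact hsep _ _ (congrArg Prod.fst ((hσ i).trans (hσ j).symm)) (hne i j hij).1
  · exact hsep _ _ (congrArg Prod.snd ((hσ i).trans (hσ j).symm)) (hne i j hij).2

lemma exists_siblings_of_mem_closure (hd : 0 < d) (hS : IsSiblingInvariant d S)
    {p : SPt × SPt} (hp : p ∈ closure (Sym2.mk.uncurry ⁻¹' S))
    (hnd : sigmaS d p.1 ≠ sigmaS d p.2) :
    ∃ t : Fin d → SPt × SPt, (∃ i, t i = p) ∧ (∀ i, t i ∈ closure (Sym2.mk.uncurry ⁻¹' S)) ∧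
      (∀ i, sigmaPair d (t i) = sigmaPair d p) ∧
      ∀ i j, i ≠ j → (t i).1 ≠ (t j).1 ∧ (t i).2 ≠ (t j).2 := by
  obtain ⟨δ, hδ, hsep⟩ := exists_pos_le_dist_of_sigmaS_eq hd
  set K := closure (Sym2.mk.uncurry ⁻¹' S)
  set C := {x : (SPt × SPt) × (Fin d → SPt × SPt) |
    IsSeparatedSiblings d δ x.1 x.2 ∧ ∀ i, x.2 i ∈ K}
  have hC : IsClosed C := by
    simp only [C, ofPred_and, ofPred_forall]
    exact (isClosed_setOf_isSeparatedSiblings δ).inter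
      (isClosed_iInter fun i => isClosed_closure.preimage (by fun_prop))
  have hU : IsOpen {q : SPt × SPt | sigmaS d q.1 ≠ sigmaS d q.2} :=
    isOpen_ne_fun (by fun_prop) (by fun_prop)
  have hsub : {q : SPt × SPt | sigmaS d q.1 ≠ sigmaS d q.2} ∩ Sym2.mk.uncurry ⁻¹' S ⊆
      Prod.fst '' C := by
    rintro g ⟨hgU, hgS⟩
    obtain ⟨t, ht, htS⟩ := exists_isSeparatedSiblings hsep hS hgS hgU
    exact ⟨(g, t), ⟨ht, fun i => subset_closure (htS i)⟩, rfl⟩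
  obtain ⟨⟨_, t⟩, ⟨⟨hex, hall⟩, htK⟩, rfl⟩ :=
    closure_minimal hsub (hC.isCompact.image continuous_fst).isClosed (hU.inter_closure ⟨hnd, hp⟩)
  refine ⟨t, hex, htK, fun i => (hall i).1, fun i j hij => ⟨?_, ?_⟩⟩
  · exact dist_pos.1 (hδ.trans_le ((hall i).2 j hij).1)
  · exact dist_pos.1 (hδ.trans_le ((hall i).2 j hij).2)

end ClosureInvariance

lemma Lamination.invariant_restrictClosure {d : ℕ} (hd : 0 < d) {Λ : Lamination}
    {S : Set Chord} (hS : S ⊆ Λ.leaves) (hdiag : ∀ z, s(z, z) ∈ S)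
    (hinv : IsSiblingInvariant d S) : (Λ.restrictClosure S hS hdiag).Invariant d := by
  refine ⟨?_, ?_, ?_⟩
  · rintro _ ⟨p, hp, rfl⟩
    exact ⟨_, mapsTo_sigmaPair_closure hinv.1 hp, rfl⟩
  · rintro _ ⟨p, hp, rfl⟩
    obtain ⟨q, hq, rfl⟩ := closure_subset_image_sigmaPair hinv.2.1 hp
    exact ⟨_, ⟨q, hq, rfl⟩, rfl⟩
  · rintro _ ⟨p, hp, rfl⟩ hnd
    obtain ⟨t, ⟨i₀, hi₀⟩, htK, htσ, htne⟩ :=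
      exists_siblings_of_mem_closure hd hinv hp (mt Sym2.mk_isDiag_iff.2 hnd)
    have hσ₁ : ∀ i, sigmaS d (t i).1 = sigmaS d p.1 := fun i => congrArg Prod.fst (htσ i)
    have hσ₂ : ∀ i, sigmaS d (t i).2 = sigmaS d p.2 := fun i => congrArg Prod.snd (htσ i)
    have hdisj : ∀ i j, i ≠ j →
        chordSet s((t i).1, (t i).2) ∩ chordSet s((t j).1, (t j).2) = ∅ := by
      intro i j hij
      refine chordSet_inter_eq_empty (Λ.no_cross _ (closure_preimage_subset hS (htK i)) _
        (closure_preimage_subset hS (htK j))) ?_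
      simp only [Sym2.mem_iff]
      rintro _ (rfl | rfl) _ (rfl | rfl) h
      · exact (htne i j hij).1 h
      · exact mt Sym2.mk_isDiag_iff.2 hnd (by rw [← hσ₁ i, ← hσ₂ j, h])
      · exact mt Sym2.mk_isDiag_iff.2 hnd (by rw [← hσ₁ j, ← hσ₂ i, h])
      · exact (htne i j hij).2 h
    refine ⟨fun i => s((t i).1, (t i).2), ⟨i₀, by subst hi₀; rfl⟩, fun i => ⟨t i, htK i, rfl⟩,
      fun i j h => ?_, hdisj, fun i => ?_⟩
    · by_contra hij
      have := hdisj i j hij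
      dsimp only at h
      rw [h, inter_self] at this
      exact eq_empty_iff_forall_notMem.1 this _ (left_mem_segment ℝ ((t j).1 : ℂ) (t j).2)
    · show s(sigmaS d (t i).1, sigmaS d (t i).2) = s(sigmaS d p.1, sigmaS d p.2)
      rw [hσ₁, hσ₂]

/-- The family `G(ℓ)`. -/
def pullbacks (Λ : Lamination) (d : ℕ) (ℓ : Chord) : Set Chord :=
  {q ∈ Λ.leaves | ∃ k m : ℕ, (chordMap d)^[k] q = (chordMap d)^[m] ℓ ∧
    ¬ ((chordMap d)^[m] ℓ).IsDiag}

section Pullbacks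

variable {Λ : Lamination} {d : ℕ} {ℓ : Chord}

lemma self_mem_pullbacks (hℓ : ℓ ∈ Λ.leaves) (hnd : ¬ ℓ.IsDiag) : ℓ ∈ pullbacks Λ d ℓ :=
  ⟨hℓ, 0, 0, rfl, hnd⟩

lemma chordMap_mem_pullbacks (hΛ : ∀ c ∈ Λ.leaves, chordMap d c ∈ Λ.leaves) {q : Chord}
    (hq : q ∈ pullbacks Λ d ℓ) (hnd : ¬ (chordMap d q).IsDiag) :
    chordMap d q ∈ pullbacks Λ d ℓ := by
  obtain ⟨hqΛ, k, m, hkm, hm⟩ := hq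
  refine ⟨hΛ q hqΛ, ?_⟩
  cases k with
  | zero =>
    refine ⟨0, m + 1, ?_, ?_⟩ <;> rw [Function.iterate_succ_apply', ← hkm]
    · rfl
    · exact hnd
  | succ k => exact ⟨k, m, by rwa [← Function.iterate_succ_apply], hm⟩

lemma mem_pullbacks_of_chordMap_mem {p : Chord} (hp : p ∈ Λ.leaves)
    (h : chordMap d p ∈ pullbacks Λ d ℓ) : p ∈ pullbacks Λ d ℓ := by
  obtain ⟨-, k, m, hkm, hm⟩ := h
  exact ⟨hp, k + 1, m, by rwa [Function.iterate_succ_apply], hm⟩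

lemma pullbacks_union_diagSet_subset : pullbacks Λ d ℓ ∪ Sym2.diagSet ⊆ Λ.leaves :=
  union_subset (fun _ h => h.1) (Sym2.range_diag ▸ range_subset_iff.2 Λ.diag_mem)

lemma isSiblingInvariant_pullbacks_union (hd : d ≠ 0) (hΛ : Λ.Invariant d) :
    IsSiblingInvariant d (pullbacks Λ d ℓ ∪ Sym2.diagSet) := by
  refine ⟨?_, ?_, ?_⟩
  · rintro c (hc | hc)
    · by_cases h : (chordMap d c).IsDiag
      · exact Or.inr h
      · exact Or.inl (chordMap_mem_pullbacks hΛ.1 hc h)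
    · exact Or.inr hc.map
  · rintro c (hc | hc)
    · obtain ⟨p, hp, rfl⟩ := hΛ.2.1 c hc.1
      exact ⟨p, Or.inl (mem_pullbacks_of_chordMap_mem hp hc), rfl⟩
    · induction c using Sym2.ind with | _ a b => ?_
      obtain rfl := Sym2.mk_isDiag_iff.1 hc
      obtain ⟨w, rfl⟩ := sigmaS_surjective hd a
      exact ⟨s(w, w), Or.inr (Sym2.mk_isDiag_iff.2 rfl), rfl⟩
  · rintro c (hc | hc) hnd
    · obtain ⟨s, hs, hsΛ, hinj, hdisj, hsmap⟩ := hΛ.2.2 c hc.1 hnd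
      refine ⟨s, hs, fun i => Or.inl (mem_pullbacks_of_chordMap_mem (hsΛ i) ?_), hinj, hdisj, hsmap⟩
      rw [hsmap i]
      exact chordMap_mem_pullbacks hΛ.1 hc hnd
    · exact absurd hc.map hnd

end Pullbacks

lemma closure_preimage_union_diagSet (S : Set Chord) :
    closure (Sym2.mk.uncurry ⁻¹' (S ∪ Sym2.diagSet)) =
      closure (Sym2.mk.uncurry ⁻¹' S) ∪ diagonal SPt := by
  have : Sym2.mk.uncurry ⁻¹' (Sym2.diagSet : Set Chord) = diagonal SPt := by
    ext ⟨a, b⟩; exact Sym2.mk_isDiag_iff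
  rw [preimage_union, closure_union, this, isClosed_diagonal.closure_eq]

theorem stmt5_general (Λ₀ Λ : Lamination)
    (hchief : IsChiefOf 3 Λ Λ₀) (ℓ : Chord) (hℓ : ℓ ∈ Λ.leaves)
    (hnd : ¬ ℓ.IsDiag) :
    ∀ ℓ' ∈ Λ.leaves, ¬ ℓ'.IsDiag → ∀ ε > (0 : ℝ),
      ∃ q ∈ Λ.leaves,
        (∃ k m : ℕ, (chordMap 3)^[k] q = (chordMap 3)^[m] ℓ ∧
          ¬ ((chordMap 3)^[m] ℓ).IsDiag) ∧
        chordDist q ℓ' < ε := by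
  intro ℓ' hℓ' hnd' ε hε
  have hS := pullbacks_union_diagSet_subset (Λ := Λ) (d := 3) (ℓ := ℓ)
  have hdiag : ∀ z, s(z, z) ∈ pullbacks Λ 3 ℓ ∪ Sym2.diagSet := fun z => Or.inr rfl
  have hΛ : (Λ.restrictClosure _ hS hdiag).leaves = Λ.leaves :=
    hchief.2.2.2 _ (Λ.restrictClosure_subset hS hdiag)
      (Λ.invariant_restrictClosure three_pos hS hdiag
        (isSiblingInvariant_pullbacks_union three_ne_zero hchief.2.1))
      ⟨ℓ, Λ.subset_restrictClosure hS hdiag (Or.inl (self_mem_pullbacks hℓ hnd)), hnd⟩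
  obtain ⟨p, hp, rfl⟩ := hΛ ▸ hℓ'
  rw [closure_preimage_union_diagSet] at hp
  obtain ⟨q, hq, hpq⟩ :=
    Metric.mem_closure_iff.1 (hp.resolve_right (mt Sym2.mk_isDiag_iff.2 hnd')) ε hε
  exact ⟨_, hq.1, hq.2, (chordDist_le_dist q p).trans_lt (by rwa [dist_comm])⟩

/-- in a chief `Λ` of a nonempty sibling `σ_3`-invariant
lamination, for any nondegenerate leaf `ℓ ∈ Λ`, the iterated pullbacks of the
nondegenerate iterated images of `ℓ` are dense in `Λ`. -/
theorem stmt5 (Λ₀ Λ : Lamination) (h₀ : Λ₀.Invariant 3) (hne : Λ₀.NonemptyLam)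
    (hchief : IsChiefOf 3 Λ Λ₀) (ℓ : Chord) (hℓ : ℓ ∈ Λ.leaves)
    (hnd : ¬ ℓ.IsDiag) :
    ∀ ℓ' ∈ Λ.leaves, ¬ ℓ'.IsDiag → ∀ ε > (0 : ℝ),
      ∃ q ∈ Λ.leaves,
        (∃ k m : ℕ, (chordMap 3)^[k] q = (chordMap 3)^[m] ℓ ∧
          ¬ ((chordMap 3)^[m] ℓ).IsDiag) ∧
        chordDist q ℓ' < ε :=
  stmt5_general Λ₀ Λ hchief ℓ hℓ hnd
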